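/- All zeros z of P(z) = z^n + a_1 z^{n-1} + ... + a_n satisfy |z| < r_ℓ for 1 ≤ ℓ ≤ q, where r_ℓ is the unique zero in [1,∞) of P_ℓ(x) = (x-1)F_ℓ(x) - A_ℓ with F_ℓ(x) = x^{ℓ-1} - Σ_{j=1}^{ℓ-1}|a_j| x^{ℓ-1-j} and A_ℓ = max_{j ≥ ℓ}|a_j|. -/

import Mathlib

/-!
Write `x = ‖z‖` and `F = cauchyPoly (‖a ·‖) (ℓ - 1)`, the paper's `F_ℓ`. For a zero with `x ≥ 1`,
the triangle inequality, the bound `‖a j‖ ≤ A_ℓ` for `j ≥ ℓ` and the geometric series give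
`x ^ (n - ℓ + 1) * (x - 1) * F x ≤ A_ℓ * (x ^ (n - ℓ + 1) - 1)`, hence `(x - 1) * F x < A_ℓ`.
Conversely `F x / x ^ (ℓ - 1) = 1 - ∑ ‖a j‖ x⁻ʲ` increases with `x`, so once
`(r_ℓ - 1) * F r_ℓ = A_ℓ > 0` we get `(x - 1) * F x ≥ A_ℓ` for every `x ≥ r_ℓ`.
-/

open Finset

def cauchyPoly (c : ℕ → ℝ) (m : ℕ) (x : ℝ) : ℝ :=
  x ^ m - ∑ j ∈ Icc 1 m, c j * x ^ (m - j)

section Monotone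

variable {c : ℕ → ℝ} {m : ℕ} {r x : ℝ}

theorem pow_mul_cauchyPoly_le (hc : ∀ j, 0 ≤ c j) (hr : 0 ≤ r) (hrx : r ≤ x) :
    x ^ m * cauchyPoly c m r ≤ r ^ m * cauchyPoly c m x := by
  have hterm : ∀ j ∈ Icc 1 m, r ^ m * (c j * x ^ (m - j)) ≤ x ^ m * (c j * r ^ (m - j)) := by
    intro j hj
    have hjm : j ≤ m := (mem_Icc.mp hj).2
    have hx : 0 ≤ x := hr.trans hrx
    have key : r ^ m * x ^ (m - j) ≤ x ^ m * r ^ (m - j) := by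
      rw [← Nat.sub_add_cancel hjm, pow_add, pow_add, Nat.add_sub_cancel]
      calc r ^ (m - j) * r ^ j * x ^ (m - j) = r ^ (m - j) * x ^ (m - j) * r ^ j := by ring
        _ ≤ r ^ (m - j) * x ^ (m - j) * x ^ j := by gcongr
        _ = x ^ (m - j) * x ^ j * r ^ (m - j) := by ring
    linarith [mul_le_mul_of_nonneg_left key (hc j)]
  have := sum_le_sum hterm
  simp only [cauchyPoly, mul_sub, mul_sum]
  linarith [mul_comm (x ^ m) (r ^ m)]

theorem cauchyPoly_le_of_le (hc : ∀ j, 0 ≤ c j) (hr : 0 < r) (hrx : r ≤ x)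
    (hF : 0 ≤ cauchyPoly c m r) : cauchyPoly c m r ≤ cauchyPoly c m x := by
  refine le_of_mul_le_mul_left ?_ (pow_pos hr m)
  calc r ^ m * cauchyPoly c m r ≤ x ^ m * cauchyPoly c m r := by gcongr
    _ ≤ r ^ m * cauchyPoly c m x := pow_mul_cauchyPoly_le hc hr.le hrx

theorem sub_one_mul_cauchyPoly_le (hc : ∀ j, 0 ≤ c j) (hr : 1 ≤ r) (hrx : r ≤ x)
    (hpos : 0 < (r - 1) * cauchyPoly c m r) :
    (r - 1) * cauchyPoly c m r ≤ (x - 1) * cauchyPoly c m x := by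
  have hF : 0 < cauchyPoly c m r := pos_of_mul_pos_right hpos (by linarith)
  have := cauchyPoly_le_of_le hc (by linarith) hrx hF.le
  gcongr
  linarith

end Monotone

theorem norm_pow_le_sum_of_root {K : Type*} [NormedDivisionRing K] {n : ℕ} {a : ℕ → K} {z : K}
    (hz : z ^ n + ∑ j ∈ Icc 1 n, a j * z ^ (n - j) = 0) :
    ‖z‖ ^ n ≤ ∑ j ∈ Icc 1 n, ‖a j‖ * ‖z‖ ^ (n - j) := by
  calc ‖z‖ ^ n = ‖∑ j ∈ Icc 1 n, a j * z ^ (n - j)‖ := by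
        rw [← norm_pow, eq_neg_of_add_eq_zero_left hz, norm_neg]
    _ ≤ ∑ j ∈ Icc 1 n, ‖a j * z ^ (n - j)‖ := norm_sum_le _ _
    _ = ∑ j ∈ Icc 1 n, ‖a j‖ * ‖z‖ ^ (n - j) := by simp only [norm_mul, norm_pow]

section RootBound

variable {c : ℕ → ℝ} {m n : ℕ} {A x : ℝ}

theorem sum_Icc_one_eq_sum_Icc_add_sum_Icc {M : Type*} [AddCommMonoid M] (f : ℕ → M)
    (hmn : m ≤ n) :
    ∑ j ∈ Icc 1 n, f j = ∑ j ∈ Icc 1 m, f j + ∑ j ∈ Icc (m + 1) n, f j := by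
  simpa only [← Icc_add_one_left_eq_Ioc, zero_add] using
    (sum_Ioc_consecutive f (Nat.zero_le m) hmn).symm

theorem pow_sub_sum_Icc_eq_pow_mul_cauchyPoly (hmn : m ≤ n) :
    x ^ n - ∑ j ∈ Icc 1 m, c j * x ^ (n - j) = x ^ (n - m) * cauchyPoly c m x := by
  rw [cauchyPoly, mul_sub, mul_sum, ← pow_add, Nat.sub_add_cancel hmn]
  congr 1
  refine sum_congr rfl fun j hj => ?_
  rw [mul_left_comm, ← pow_add]
  congr 2
  have := (mem_Icc.mp hj).2
  omega

theorem sum_Icc_mul_pow_le (hA : ∀ j > m, c j ≤ A) (hx : 0 ≤ x) :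
    ∑ j ∈ Icc (m + 1) n, c j * x ^ (n - j) ≤ A * ∑ i ∈ range (n - m), x ^ i := by
  have hreflect : ∑ j ∈ Icc (m + 1) n, x ^ (n - j) = ∑ i ∈ range (n - m), x ^ i := by
    rw [← Ico_add_one_right_eq_Icc, sum_Ico_reflect _ _ le_rfl, range_eq_Ico, Nat.sub_self,
      Nat.add_sub_add_right]
  rw [← hreflect, mul_sum]
  exact sum_le_sum fun j hj => by
    gcongr
    exact hA j (mem_Icc.mp hj).1

theorem sub_one_mul_cauchyPoly_lt (hmn : m ≤ n) (hA : ∀ j > m, c j ≤ A) (hA0 : 0 < A)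
    (hx : 1 ≤ x) (hroot : x ^ n ≤ ∑ j ∈ Icc 1 n, c j * x ^ (n - j)) :
    (x - 1) * cauchyPoly c m x < A := by
  have hgeom : (x - 1) * ∑ i ∈ range (n - m), x ^ i = x ^ (n - m) - 1 := by
    rw [mul_comm, geom_sum_mul]
  have htail := sum_Icc_mul_pow_le (n := n) hA (by linarith : 0 ≤ x)
  rw [sum_Icc_one_eq_sum_Icc_add_sum_Icc _ hmn] at hroot
  refine lt_of_mul_lt_mul_left ?_ (by positivity : 0 ≤ x ^ (n - m))
  calc x ^ (n - m) * ((x - 1) * cauchyPoly c m x)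
      = (x - 1) * (x ^ n - ∑ j ∈ Icc 1 m, c j * x ^ (n - j)) := by
        rw [pow_sub_sum_Icc_eq_pow_mul_cauchyPoly hmn]; ring
    _ ≤ (x - 1) * (A * ∑ i ∈ range (n - m), x ^ i) :=
        mul_le_mul_of_nonneg_left (by linarith) (by linarith)
    _ = A * (x ^ (n - m) - 1) := by rw [← hgeom]; ring
    _ < x ^ (n - m) * A := by linarith

end RootBound

theorem zeros_lt_rl_general (n q : ℕ) (a : ℕ → ℂ) (hq : a q ≠ 0)
    (hqn : q ≤ n)
    (ℓ : ℕ) (hℓq : ℓ ≤ q) (Aℓ : ℝ)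
    (hA : IsGreatest {x : ℝ | ∃ j ≥ ℓ, x = ‖a j‖} Aℓ)
    (rℓ : ℝ) (hrℓ1 : 1 ≤ rℓ)
    (hrℓ : (rℓ - 1) * (rℓ ^ (ℓ - 1) -
        ∑ j ∈ Finset.Icc 1 (ℓ - 1), ‖a j‖ * rℓ ^ (ℓ - 1 - j))
        - Aℓ = 0) :
    ∀ z : ℂ, z ^ n + ∑ j ∈ Finset.Icc 1 n, a j * z ^ (n - j) = 0 →
      ‖z‖ < rℓ := by
  intro z hz
  have hA_bound : ∀ j > ℓ - 1, ‖a j‖ ≤ Aℓ := fun j hj => hA.2 ⟨j, by omega, rfl⟩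
  have hA_pos : 0 < Aℓ := (norm_pos_iff.mpr hq).trans_le (hA.2 ⟨q, hℓq, rfl⟩)
  have hrℓ_eq : (rℓ - 1) * cauchyPoly (‖a ·‖) (ℓ - 1) rℓ = Aℓ := sub_eq_zero.mp hrℓ
  by_contra! hrz
  have hlt := sub_one_mul_cauchyPoly_lt (by omega) hA_bound hA_pos (hrℓ1.trans hrz)
    (norm_pow_le_sum_of_root hz)
  have hge := sub_one_mul_cauchyPoly_le (fun j => norm_nonneg (a j)) hrℓ1 hrz
    (hrℓ_eq ▸ hA_pos)
  linarith

theorem zeros_lt_rl (n q : ℕ) (hn : 1 ≤ n) (a : ℕ → ℂ) (hq : a q ≠ 0)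
    (hqn : q ≤ n) (ha0 : ∀ j > q, a j = 0)
    (ℓ : ℕ) (hℓ1 : 1 ≤ ℓ) (hℓq : ℓ ≤ q) (Aℓ : ℝ)
    (hA : IsGreatest {x : ℝ | ∃ j ≥ ℓ, x = ‖a j‖} Aℓ)
    (rℓ : ℝ) (hrℓ1 : 1 ≤ rℓ)
    (hrℓ : (rℓ - 1) * (rℓ ^ (ℓ - 1) -
        ∑ j ∈ Finset.Icc 1 (ℓ - 1), ‖a j‖ * rℓ ^ (ℓ - 1 - j))
        - Aℓ = 0)
    (hrℓuniq : ∀ y : ℝ, 1 ≤ y →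
      (y - 1) * (y ^ (ℓ - 1) -
        ∑ j ∈ Finset.Icc 1 (ℓ - 1), ‖a j‖ * y ^ (ℓ - 1 - j))
        - Aℓ = 0 → y = rℓ) :
    ∀ z : ℂ, z ^ n + ∑ j ∈ Finset.Icc 1 n, a j * z ^ (n - j) = 0 →
      ‖z‖ < rℓ :=
  zeros_lt_rl_general n q a hq hqn ℓ hℓq Aℓ hA rℓ hrℓ1 hrℓ
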